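/- Let r > 0, θ ∈ (0, π), φ ∈ (0, π), L_x > 0, L_z > 0, η > 0, k₀ > 0, and set Φ = cos φ · sin θ, Ψ = sin φ · sin θ, Θ = cos θ. Then ∫_{−L_z/2}^{L_z/2} ∫_0^{L_x} (η² k₀² / (4π)) · r·Ψ · (x² + z² − 2r(Φ·x + Θ·z) + r²)^(−3/2) dx dz = (η² k₀² / (4π)) · Σ_{u ∈ {Φ, L_x/r − Φ}} Σ_{v ∈ {L_z/(2r) − Θ, L_z/(2r) + Θ}} arctan( u·v / (Ψ · √(Ψ² + u² + v²)) ). -/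

import Mathlib

/-!
Completing the square with `Φ² + Ψ² + Θ² = 1` turns the denominator into the squared distance
`(x - rΦ)² + (z - rΘ)² + (rΨ)²` from the user to the aperture point, so after a translation the
gain is a constant times the integral of `(x² + z² + a²)^(-3/2)`, `a = rΨ`, over a rectangle.
Integrating in `x` gives `x / ((z² + a²) √(x² + z² + a²))`, and an antiderivative of that in `z`
is `arctan (x z / (a √(x² + z² + a²))) / a = zeta a x z / a`, so the rectangle integral is an
alternating sum of `zeta a` over the corners. Rescaling by `r` and the oddness of `zeta` in
each corner coordinate give the four terms of the closed form.
-/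

/-- The function `ζ(Ψ, u, v) = arctan( u·v / (Ψ·√(Ψ² + u² + v²)) )` from Theorem 1
of the paper. -/
noncomputable def zeta (Ψ u v : ℝ) : ℝ :=
  Real.arctan (u * v / (Ψ * Real.sqrt (Ψ ^ 2 + u ^ 2 + v ^ 2)))

open Real intervalIntegral

lemma rpow_neg_three_halves {t : ℝ} (ht : 0 ≤ t) : t ^ (-(3 : ℝ) / 2) = (t * √t)⁻¹ := by
  rw [show -(3 : ℝ) / 2 = -(1 + 1 / 2) by norm_num, rpow_neg ht,
    rpow_add' ht (by norm_num), rpow_one, ← sqrt_eq_rpow]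

lemma hasDerivAt_div_mul_sqrt {c : ℝ} (hc : 0 < c) (x : ℝ) :
    HasDerivAt (fun x => x / (c * √(x ^ 2 + c))) ((x ^ 2 + c) ^ (-(3 : ℝ) / 2)) x := by
  have hQ : 0 < x ^ 2 + c := by positivity
  have hsq : √(x ^ 2 + c) ^ 2 = x ^ 2 + c := sq_sqrt hQ.le
  have hs : 0 < √(x ^ 2 + c) := sqrt_pos.mpr hQ
  have hden : HasDerivAt (fun x => c * √(x ^ 2 + c)) (c * (2 * x / (2 * √(x ^ 2 + c)))) x :=
    (((hasDerivAt_pow 2 x).add_const c).sqrt hQ.ne').const_mul c |>.congr_deriv (by ring)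
  refine ((hasDerivAt_id x).div hden (by positivity)).congr_deriv ?_
  rw [rpow_neg_three_halves hQ.le, id]
  field_simp
  linear_combination x ^ 2 * hsq

lemma integral_sq_add_rpow_neg_three_halves {c : ℝ} (hc : 0 < c) (x₁ x₂ : ℝ) :
    ∫ x in x₁..x₂, (x ^ 2 + c) ^ (-(3 : ℝ) / 2)
      = x₂ / (c * √(x₂ ^ 2 + c)) - x₁ / (c * √(x₁ ^ 2 + c)) := by
  have hcont : Continuous fun x : ℝ => (x ^ 2 + c) ^ (-(3 : ℝ) / 2) :=
    continuous_iff_continuousAt.mpr fun x =>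
      ((continuous_pow 2).add continuous_const).continuousAt.rpow_const
        (Or.inl (by positivity : (0 : ℝ) < x ^ 2 + c).ne')
  exact integral_eq_sub_of_hasDerivAt (fun x _ => hasDerivAt_div_mul_sqrt hc x)
    (hcont.intervalIntegrable x₁ x₂)

lemma hasDerivAt_zeta_div {a : ℝ} (ha : 0 < a) (x z : ℝ) :
    HasDerivAt (fun z => zeta a x z / a)
      (x / ((z ^ 2 + a ^ 2) * √(x ^ 2 + (z ^ 2 + a ^ 2)))) z := by
  have hS : 0 < a ^ 2 + x ^ 2 + z ^ 2 := by positivity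
  have hsq : √(a ^ 2 + x ^ 2 + z ^ 2) ^ 2 = a ^ 2 + x ^ 2 + z ^ 2 := sq_sqrt hS.le
  have hs : 0 < √(a ^ 2 + x ^ 2 + z ^ 2) := sqrt_pos.mpr hS
  have hden : HasDerivAt (fun z => a * √(a ^ 2 + x ^ 2 + z ^ 2))
      (a * (2 * z / (2 * √(a ^ 2 + x ^ 2 + z ^ 2)))) z :=
    (((hasDerivAt_pow 2 z).const_add (a ^ 2 + x ^ 2)).sqrt hS.ne').const_mul a
      |>.congr_deriv (by ring)
  have hnum : HasDerivAt (fun z => x * z) x z := by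
    simpa using (hasDerivAt_id z).const_mul x
  refine ((hnum.div hden (by positivity)).arctan.div_const a).congr_deriv ?_
  rw [Pi.div_apply, show x ^ 2 + (z ^ 2 + a ^ 2) = a ^ 2 + x ^ 2 + z ^ 2 by ring]
  field_simp
  linear_combination x * z ^ 2 * hsq

lemma integral_integral_rpow_neg_three_halves {a : ℝ} (ha : 0 < a) (x₁ x₂ z₁ z₂ : ℝ) :
    ∫ z in z₁..z₂, ∫ x in x₁..x₂, (x ^ 2 + z ^ 2 + a ^ 2) ^ (-(3 : ℝ) / 2)
      = (zeta a x₂ z₂ - zeta a x₁ z₂ - zeta a x₂ z₁ + zeta a x₁ z₁) / a := by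
  have hinner (z : ℝ) := integral_sq_add_rpow_neg_three_halves (c := z ^ 2 + a ^ 2)
    (by positivity) x₁ x₂
  have hcont (x : ℝ) :
      Continuous fun z => x / ((z ^ 2 + a ^ 2) * √(x ^ 2 + (z ^ 2 + a ^ 2))) :=
    continuous_const.div (by fun_prop) fun z => by positivity
  have houter (x : ℝ) : ∫ z in z₁..z₂, x / ((z ^ 2 + a ^ 2) * √(x ^ 2 + (z ^ 2 + a ^ 2)))
      = zeta a x z₂ / a - zeta a x z₁ / a :=
    integral_eq_sub_of_hasDerivAt (fun z _ => hasDerivAt_zeta_div ha x z)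
      ((hcont x).intervalIntegrable z₁ z₂)
  simp_rw [add_assoc, hinner]
  rw [integral_sub ((hcont x₂).intervalIntegrable z₁ z₂) ((hcont x₁).intervalIntegrable z₁ z₂),
    houter, houter]
  ring

lemma integral_integral_sub_rpow_neg_three_halves {a : ℝ} (ha : 0 < a)
    (p q x₁ x₂ z₁ z₂ : ℝ) :
    ∫ z in z₁..z₂, ∫ x in x₁..x₂, ((x - p) ^ 2 + (z - q) ^ 2 + a ^ 2) ^ (-(3 : ℝ) / 2)
      = (zeta a (x₂ - p) (z₂ - q) - zeta a (x₁ - p) (z₂ - q)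
          - zeta a (x₂ - p) (z₁ - q) + zeta a (x₁ - p) (z₁ - q)) / a := by
  have hshift (z : ℝ) := integral_comp_sub_right
    (fun x => (x ^ 2 + (z - q) ^ 2 + a ^ 2) ^ (-(3 : ℝ) / 2)) p (a := x₁) (b := x₂)
  simp_rw [hshift]
  rw [integral_comp_sub_right
    (fun z => ∫ x in x₁ - p..x₂ - p, (x ^ 2 + z ^ 2 + a ^ 2) ^ (-(3 : ℝ) / 2)) q,
    integral_integral_rpow_neg_three_halves ha]

lemma zeta_mul {r : ℝ} (hr : 0 < r) (a u v : ℝ) : zeta (r * a) (r * u) (r * v) = zeta a u v := by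
  unfold zeta
  rw [show (r * a) ^ 2 + (r * u) ^ 2 + (r * v) ^ 2 = r ^ 2 * (a ^ 2 + u ^ 2 + v ^ 2) by ring,
    sqrt_mul (sq_nonneg r), sqrt_sq hr.le,
    show r * u * (r * v) / (r * a * (r * √(a ^ 2 + u ^ 2 + v ^ 2)))
      = (r * r) * (u * v) / ((r * r) * (a * √(a ^ 2 + u ^ 2 + v ^ 2))) by ring,
    mul_div_mul_left _ _ (mul_pos hr hr).ne']

lemma zeta_neg_left (a u v : ℝ) : zeta a (-u) v = -zeta a u v := by
  simp only [zeta, neg_sq, neg_mul, neg_div, arctan_neg]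

lemma zeta_neg_right (a u v : ℝ) : zeta a u (-v) = -zeta a u v := by
  simp only [zeta, neg_sq, mul_neg, neg_div, arctan_neg]

theorem downlink_channel_gain_closed_form_general
    (r θ φ Lx Lz η k₀ Φ Ψ Θ : ℝ)
    (hr : 0 < r) (hθ : θ ∈ Set.Ioo 0 Real.pi) (hφ : φ ∈ Set.Ioo 0 Real.pi)
    (hΦ : Φ = Real.cos φ * Real.sin θ) (hΨ : Ψ = Real.sin φ * Real.sin θ)
    (hΘ : Θ = Real.cos θ) :
    ∫ z in (-(Lz / 2))..(Lz / 2), ∫ x in (0 : ℝ)..Lx,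
        η ^ 2 * k₀ ^ 2 / (4 * Real.pi) * (r * Ψ) *
          (x ^ 2 + z ^ 2 - 2 * r * (Φ * x + Θ * z) + r ^ 2) ^ (-(3 : ℝ) / 2)
      = η ^ 2 * k₀ ^ 2 / (4 * Real.pi) *
          (zeta Ψ Φ (Lz / (2 * r) - Θ) + zeta Ψ Φ (Lz / (2 * r) + Θ)
            + zeta Ψ (Lx / r - Φ) (Lz / (2 * r) - Θ)
            + zeta Ψ (Lx / r - Φ) (Lz / (2 * r) + Θ)) := by
  have hΨpos : 0 < Ψ := hΨ ▸ mul_pos (sin_pos_of_pos_of_lt_pi hφ.1 hφ.2)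
    (sin_pos_of_pos_of_lt_pi hθ.1 hθ.2)
  have hunit : Φ ^ 2 + Ψ ^ 2 + Θ ^ 2 = 1 := by
    rw [hΦ, hΨ, hΘ]
    linear_combination sin θ ^ 2 * sin_sq_add_cos_sq φ + sin_sq_add_cos_sq θ
  have hdist (x z : ℝ) : x ^ 2 + z ^ 2 - 2 * r * (Φ * x + Θ * z) + r ^ 2
      = (x - r * Φ) ^ 2 + (z - r * Θ) ^ 2 + (r * Ψ) ^ 2 := by
    linear_combination (-r ^ 2) * hunit
  have hcorner (u v : ℝ) :
      zeta (r * Ψ) (u - r * Φ) (v - r * Θ) = zeta Ψ (u / r - Φ) (v / r - Θ) := by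
    rw [show u - r * Φ = r * (u / r - Φ) by field_simp,
      show v - r * Θ = r * (v / r - Θ) by field_simp, zeta_mul hr]
  simp_rw [hdist, integral_const_mul,
    integral_integral_sub_rpow_neg_three_halves (mul_pos hr hΨpos), hcorner]
  rw [zero_div, zero_sub, neg_div, div_div,
    show -(Lz / (2 * r)) - Θ = -(Lz / (2 * r) + Θ) by ring,
    zeta_neg_left, zeta_neg_left, zeta_neg_right, zeta_neg_right]
  field_simp
  ring

/-- Theorem 1 of the paper: the closed-form downlink channel gain
`g_d = ∫_{A_t} |h_d(t)|² dt` over the transmit aperture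
`A_t = [0, L_x] × [−L_z/2, L_z/2]`, where
`|h_d(t)|² = (η²k₀²/(4π)) · rΨ · (x² + z² − 2r(Φx + Θz) + r²)^{-3/2}` and
`Φ = cos φ sin θ`, `Ψ = sin φ sin θ`, `Θ = cos θ`. -/
theorem downlink_channel_gain_closed_form
    (r θ φ Lx Lz η k₀ Φ Ψ Θ : ℝ)
    (hr : 0 < r) (hθ : θ ∈ Set.Ioo 0 Real.pi) (hφ : φ ∈ Set.Ioo 0 Real.pi)
    (hLx : 0 < Lx) (hLz : 0 < Lz) (hη : 0 < η) (hk : 0 < k₀)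
    (hΦ : Φ = Real.cos φ * Real.sin θ) (hΨ : Ψ = Real.sin φ * Real.sin θ)
    (hΘ : Θ = Real.cos θ) :
    ∫ z in (-(Lz / 2))..(Lz / 2), ∫ x in (0 : ℝ)..Lx,
        η ^ 2 * k₀ ^ 2 / (4 * Real.pi) * (r * Ψ) *
          (x ^ 2 + z ^ 2 - 2 * r * (Φ * x + Θ * z) + r ^ 2) ^ (-(3 : ℝ) / 2)
      = η ^ 2 * k₀ ^ 2 / (4 * Real.pi) *
          (zeta Ψ Φ (Lz / (2 * r) - Θ) + zeta Ψ Φ (Lz / (2 * r) + Θ)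
            + zeta Ψ (Lx / r - Φ) (Lz / (2 * r) - Θ)
            + zeta Ψ (Lx / r - Φ) (Lz / (2 * r) + Θ)) :=
  downlink_channel_gain_closed_form_general r θ φ Lx Lz η k₀ Φ Ψ Θ hr hθ hφ hΦ hΨ hΘ
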